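/- Let G be a simple graph on n ≥ 2 vertices with adjacency matrix A, let λ₁ > 0 be its largest eigenvalue, set λ(A) := max(λ₂(A), |λ_n(A)|) and ρ := λ(A)/λ₁, and let u := n^{−1/2}(1,…,1). Suppose there is a unit-norm eigenvector v₁ of A for λ₁ with ‖v₁ − u‖_∞ ≤ ε₀/√n for some ε₀ ∈ [0,1). Then for every vertex i and every positive integer d, the number of vertices j such that (Aᵈ)_{ij} = 0 is at most n²·ρ^{2d}/(1−ε₀)⁴. -/

import Mathlib

/-!
Write `1_Z = c • v₁ + w` with `c = ⟪v₁, 1_Z⟫` and `w ⊥ v₁`. If `λ₁ > λ(A)`, then `λ₁` is a simple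
eigenvalue and `v₁` spans its eigenspace, so `w` lies in the span of the eigenvectors whose
eigenvalues are at most `λ(A)` in absolute value; if `λ₁ ≤ λ(A)` this holds for all eigenvectors.
Either way `‖Aᵈ w‖ ≤ λ(A)ᵈ ‖w‖ ≤ λ(A)ᵈ √|Z|`. Coordinate `i` of `0 = Aᵈ 1_Z = c λ₁ᵈ v₁ + Aᵈ w`
then gives `c λ₁ᵈ v₁ᵢ ≤ λ(A)ᵈ √|Z|`, while `v₁ⱼ ≥ (1 - ε₀)/√n` for all `j` gives
`c ≥ |Z| (1 - ε₀)/√n`.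
-/

open scoped RealInnerProductSpace

theorem norm_sub_inner_smul_sq {E : Type*} [NormedAddCommGroup E] [InnerProductSpace ℝ E]
    {v : E} (hv : ‖v‖ = 1) (x : E) : ‖x - ⟪v, x⟫ • v‖ ^ 2 = ‖x‖ ^ 2 - ⟪v, x⟫ ^ 2 := by
  rw [norm_sub_sq_real, inner_smul_right, norm_smul, real_inner_comm, hv, Real.norm_eq_abs,
    mul_one, sq_abs]
  ring

namespace LinearMap.IsSymmetric

variable {ι E : Type*} [Fintype ι] [NormedAddCommGroup E] [InnerProductSpace ℝ E]
  {T : E →ₗ[ℝ] E}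

theorem inner_eq_zero_of_eigenvalue_ne (hT : T.IsSymmetric) {u v : E} {α β : ℝ}
    (hu : T u = α • u) (hv : T v = β • v) (hαβ : α ≠ β) : ⟪u, v⟫ = 0 := by
  have h : α * ⟪u, v⟫ = β * ⟪u, v⟫ := by
    rw [← real_inner_smul_left, ← hu, hT, hv, real_inner_smul_right]
  exact (mul_eq_mul_right_iff.mp h).resolve_left hαβ

theorem inner_pow_apply_of_apply_eq_smul (hT : T.IsSymmetric) {u : E} {α : ℝ}
    (hu : T u = α • u) (x : E) (d : ℕ) : ⟪u, (T ^ d) x⟫ = α ^ d * ⟪u, x⟫ := by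
  induction d with
  | zero => simp
  | succ d ih =>
    rw [pow_succ', Module.End.mul_apply, ← hT, hu, real_inner_smul_left, ih, pow_succ']
    ring

variable (b : OrthonormalBasis ι ℝ E) {μ : ι → ℝ}

theorem eq_inner_smul_of_simple_eigenvalue (hT : T.IsSymmetric) (hb : ∀ k, T (b k) = μ k • b k)
    {k₀ : ι} (hsimple : ∀ k ≠ k₀, μ k ≠ μ k₀) {v : E} (hv : T v = μ k₀ • v) :
    v = ⟪b k₀, v⟫ • b k₀ := by
  classical
  conv_lhs => rw [← b.sum_repr' v]
  refine Finset.sum_eq_single k₀ (fun k _ hk => ?_) (by simp)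
  rw [hT.inner_eq_zero_of_eigenvalue_ne (hb k) hv (hsimple k hk), zero_smul]

theorem norm_pow_apply_sq_le (hT : T.IsSymmetric) (hb : ∀ k, T (b k) = μ k • b k) {L : ℝ}
    {x : E} (hx : ∀ k, L < |μ k| → ⟪b k, x⟫ = 0) (d : ℕ) :
    ‖(T ^ d) x‖ ^ 2 ≤ L ^ (2 * d) * ‖x‖ ^ 2 := by
  rw [← b.sum_sq_inner_right, ← b.sum_sq_inner_right, Finset.mul_sum]
  refine Finset.sum_le_sum fun k _ => ?_
  rw [hT.inner_pow_apply_of_apply_eq_smul (hb k), mul_pow, ← pow_mul, mul_comm d]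
  rcases lt_or_ge L |μ k| with hk | hk
  · simp [hx k hk]
  · refine mul_le_mul_of_nonneg_right ?_ (sq_nonneg _)
    rw [pow_mul, pow_mul, ← sq_abs]
    exact pow_le_pow_left₀ (sq_nonneg _) (pow_le_pow_left₀ (abs_nonneg _) hk 2) d

theorem norm_pow_apply_sub_sq_le (hT : T.IsSymmetric) (hb : ∀ k, T (b k) = μ k • b k)
    {μ₀ L : ℝ} (hgap : ∀ k, L < |μ k| → μ k = μ₀ ∧ ∀ k' ≠ k, μ k' ≠ μ₀) {v : E}
    (hv : T v = μ₀ • v) (hv₁ : ‖v‖ = 1) (x : E) (d : ℕ) :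
    ‖(T ^ d) x - (⟪v, x⟫ * μ₀ ^ d) • v‖ ^ 2 ≤ L ^ (2 * d) * ‖x‖ ^ 2 := by
  set w := x - ⟪v, x⟫ • v
  have hvw : ⟪v, w⟫ = 0 := by
    rw [inner_sub_right, real_inner_smul_right, real_inner_self_eq_norm_sq, hv₁]; ring
  have hw : ∀ k, L < |μ k| → ⟪b k, w⟫ = 0 := by
    intro k hk
    obtain ⟨hk₀, hsimple⟩ := hgap k hk
    subst hk₀
    have hvk := hT.eq_inner_smul_of_simple_eigenvalue b hb hsimple hv
    have hvk₀ : ⟪b k, v⟫ ≠ 0 := by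
      rintro h
      rw [h, zero_smul] at hvk
      simp [hvk] at hv₁
    rw [hvk, real_inner_smul_left] at hvw
    exact (mul_eq_zero.mp hvw).resolve_left hvk₀
  have hpow : (T ^ d) x - (⟪v, x⟫ * μ₀ ^ d) • v = (T ^ d) w := by
    have hv₀ : v ≠ 0 := norm_ne_zero_iff.mp (by simp [hv₁])
    have hev : (T ^ d) v = μ₀ ^ d • v :=
      (Module.End.hasEigenvector_iff.mpr ⟨Module.End.mem_eigenspace_iff.mpr hv, hv₀⟩).pow_apply d
    rw [map_sub, map_smul, hev, smul_smul]
  calc ‖(T ^ d) x - (⟪v, x⟫ * μ₀ ^ d) • v‖ ^ 2 = ‖(T ^ d) w‖ ^ 2 := by rw [hpow]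
    _ ≤ L ^ (2 * d) * ‖w‖ ^ 2 := hT.norm_pow_apply_sq_le b hb hw d
    _ ≤ L ^ (2 * d) * ‖x‖ ^ 2 := by
      refine mul_le_mul_of_nonneg_left ?_ ((even_two_mul d).pow_nonneg L)
      rw [norm_sub_inner_smul_sq hv₁]
      nlinarith [sq_nonneg ⟪v, x⟫]

end LinearMap.IsSymmetric

theorem Antitone.abs_le_max_of_ne_zero {n : ℕ} {f : Fin n → ℝ} (hf : Antitone f) (hn : 1 < n)
    {m : Fin n} (hm : m ≠ ⟨0, by omega⟩) : |f m| ≤ max (f ⟨1, hn⟩) |f ⟨n - 1, by omega⟩| := by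
  have hm₀ : m.val ≠ 0 := fun h => hm (Fin.ext h)
  have hlow : f ⟨n - 1, by omega⟩ ≤ f m := hf (Fin.le_def.mpr (by simp; omega))
  have hup : f m ≤ f ⟨1, hn⟩ := hf (Fin.le_def.mpr (by simp; omega))
  refine abs_le.mpr ⟨?_, hup.trans (le_max_left _ _)⟩
  linarith [neg_abs_le (f ⟨n - 1, by omega⟩), le_max_right (f ⟨1, hn⟩) |f ⟨n - 1, by omega⟩|]

theorem Antitone.eq_and_ne_of_max_lt_abs {n : ℕ} {f : Fin n → ℝ} (hf : Antitone f) (hn : 1 < n)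
    (hpos : 0 < f ⟨0, by omega⟩) {k : Fin n} (hk : max (f ⟨1, hn⟩) |f ⟨n - 1, by omega⟩| < |f k|) :
    f k = f ⟨0, by omega⟩ ∧ ∀ k' ≠ k, f k' ≠ f ⟨0, by omega⟩ := by
  obtain rfl : k = ⟨0, by omega⟩ := by
    by_contra hk₀
    exact (hf.abs_le_max_of_ne_zero hn hk₀).not_gt hk
  refine ⟨rfl, fun k' hk' => ?_⟩
  have := (le_abs_self _).trans (hf.abs_le_max_of_ne_zero hn hk')
  rw [abs_of_pos hpos] at hk
  exact (this.trans_lt hk).ne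

open Matrix in
theorem Matrix.IsHermitian.sq_pow_mulVec_apply_sub_le {n : ℕ} (hn : 1 < n)
    {A : Matrix (Fin n) (Fin n) ℝ} (hA : A.IsHermitian) {ev : Fin n → ℝ} {σ : Equiv.Perm (Fin n)}
    (hev : ev = hA.eigenvalues ∘ σ) (hsort : Antitone ev) (hpos : 0 < ev ⟨0, by omega⟩)
    {v : Fin n → ℝ} (hv : A *ᵥ v = ev ⟨0, by omega⟩ • v) (hunit : ∑ j, v j ^ 2 = 1)
    (x : Fin n → ℝ) (i : Fin n) (d : ℕ) :
    ((A ^ d *ᵥ x) i - v ⬝ᵥ x * ev ⟨0, by omega⟩ ^ d * v i) ^ 2 ≤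
      max (ev ⟨1, hn⟩) |ev ⟨n - 1, by omega⟩| ^ (2 * d) * ∑ j, x j ^ 2 := by
  set b := hA.eigenvectorBasis.reindex σ.symm
  have hb : ∀ k, toEuclideanLin A (b k) = ev k • b k := by
    intro k
    rw [OrthonormalBasis.reindex_apply, Equiv.symm_symm, hev]
    exact congrArg (WithLp.toLp 2) (hA.mulVec_eigenvectorBasis (σ k))
  have hv₁ : ‖WithLp.toLp 2 v‖ = 1 := by
    rw [← pow_eq_one_iff_of_nonneg (norm_nonneg _) two_ne_zero, EuclideanSpace.real_norm_sq_eq]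
    exact hunit
  have key := (isSymmetric_toEuclideanLin_iff.mpr hA).norm_pow_apply_sub_sq_le b hb
    (fun k hk => hsort.eq_and_ne_of_max_lt_abs hn hpos hk) (congrArg (WithLp.toLp 2) hv) hv₁
    (WithLp.toLp 2 x) d
  rw [← toLpLin_pow, EuclideanSpace.inner_toLp_toLp, star_trivial, dotProduct_comm,
    EuclideanSpace.real_norm_sq_eq (WithLp.toLp 2 x)] at key
  refine le_trans ?_ key
  have := pow_le_pow_left₀ (norm_nonneg _) (PiLp.norm_apply_le
    (toLpLin 2 2 (A ^ d) (WithLp.toLp 2 x) - (v ⬝ᵥ x * ev ⟨0, by omega⟩ ^ d) • WithLp.toLp 2 v) i) 2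
  rw [Real.norm_eq_abs, sq_abs] at this
  exact this

open Matrix in
theorem Matrix.IsHermitian.sq_sum_mul_pow_le_of_pow_apply_eq_zero {n : ℕ} (hn : 1 < n)
    {A : Matrix (Fin n) (Fin n) ℝ} (hA : A.IsHermitian) {ev : Fin n → ℝ} {σ : Equiv.Perm (Fin n)}
    (hev : ev = hA.eigenvalues ∘ σ) (hsort : Antitone ev) (hpos : 0 < ev ⟨0, by omega⟩)
    {v : Fin n → ℝ} (hv : A *ᵥ v = ev ⟨0, by omega⟩ • v) (hunit : ∑ j, v j ^ 2 = 1)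
    {i : Fin n} {d : ℕ} {Z : Finset (Fin n)} (hZ : ∀ j ∈ Z, (A ^ d) i j = 0) :
    ((∑ j ∈ Z, v j) * ev ⟨0, by omega⟩ ^ d * v i) ^ 2 ≤
      (max (ev ⟨1, hn⟩) |ev ⟨n - 1, by omega⟩| ^ d) ^ 2 * Z.card := by
  classical
  set χ : Fin n → ℝ := fun j => if j ∈ Z then 1 else 0
  have key := hA.sq_pow_mulVec_apply_sub_le hn hev hsort hpos hv hunit χ i d
  have hAχ : (A ^ d *ᵥ χ) i = 0 := by
    rw [mulVec, dotProduct]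
    refine Finset.sum_eq_zero fun j _ => ?_
    by_cases hj : j ∈ Z <;> simp [χ, hj, hZ]
  have hvχ : v ⬝ᵥ χ = ∑ j ∈ Z, v j := by simp [χ, dotProduct]
  have hχ : ∑ j, χ j ^ 2 = Z.card := by simp [χ]
  rwa [hAχ, hvχ, zero_sub, neg_sq, hχ, mul_comm 2 d, pow_mul] at key

theorem le_div_of_sq_mul_le {K c v p l L : ℝ} (hK : 0 ≤ K) (hp : 0 < p) (hc : K * p ≤ c)
    (hv : p ≤ v) (hl : 0 < l) (h : (c * l * v) ^ 2 ≤ L ^ 2 * K) : K ≤ (L / l) ^ 2 / p ^ 4 := by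
  rcases hK.eq_or_lt with rfl | hK
  · positivity
  have hcv : K * p ^ 2 ≤ c * v := by
    calc K * p ^ 2 = K * p * p := by ring
      _ ≤ c * v := mul_le_mul hc hv hp.le ((mul_nonneg hK.le hp.le).trans hc)
  have : K * (K * (p ^ 4 * l ^ 2)) ≤ K * L ^ 2 := by
    calc K * (K * (p ^ 4 * l ^ 2)) = (K * p ^ 2 * l) ^ 2 := by ring
      _ ≤ (c * l * v) ^ 2 := by
        rw [show c * l * v = c * v * l by ring]
        exact pow_le_pow_left₀ (by positivity) (mul_le_mul_of_nonneg_right hcv hl.le) 2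
      _ ≤ K * L ^ 2 := by linarith
  rw [div_pow, div_div, le_div_iff₀ (by positivity)]
  linarith [le_of_mul_le_mul_left this hK]

theorem stmt13 (n : ℕ) (hn : 2 ≤ n)
    (A : Matrix (Fin n) (Fin n) ℝ) (hA : A.IsHermitian)
    (ev : Fin n → ℝ) (σ : Equiv.Perm (Fin n))
    (hev : ev = hA.eigenvalues ∘ σ) (hsort : Antitone ev)
    (hpos : 0 < ev ⟨0, by omega⟩)
    (v₁ : Fin n → ℝ) (hv : A.mulVec v₁ = ev ⟨0, by omega⟩ • v₁) (hunit : ∑ i, v₁ i ^ 2 = 1)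
    (ε₀ : ℝ) (hε₀1 : ε₀ < 1)
    (hinf : ∀ i, |v₁ i - (Real.sqrt n)⁻¹| ≤ ε₀ / Real.sqrt n) :
    ∀ i : Fin n, ∀ d : ℕ, 1 ≤ d →
      (({j : Fin n | (A ^ d) i j = 0}.ncard : ℝ)) ≤
        (n : ℝ) ^ 2 * (max (ev ⟨1, by omega⟩) |ev ⟨n - 1, by omega⟩| / ev ⟨0, by omega⟩) ^ (2 * d)
          / (1 - ε₀) ^ 4 := by
  intro i d _
  set μ₁ := ev ⟨0, by omega⟩
  set L := max (ev ⟨1, by omega⟩) |ev ⟨n - 1, by omega⟩|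
  set Z := Finset.univ.filter fun j => (A ^ d) i j = 0
  have hp : 0 < (1 - ε₀) / Real.sqrt n :=
    div_pos (by linarith) (Real.sqrt_pos.mpr (by positivity))
  have hvlow : ∀ j, (1 - ε₀) / Real.sqrt n ≤ v₁ j := fun j => by
    have := (abs_le.mp (hinf j)).1
    rw [sub_div, one_div]
    linarith
  have hc : Z.card * ((1 - ε₀) / Real.sqrt n) ≤ ∑ j ∈ Z, v₁ j := by
    simpa using Finset.card_nsmul_le_sum Z v₁ _ fun j _ => hvlow j
  have hsq : ((∑ j ∈ Z, v₁ j) * μ₁ ^ d * v₁ i) ^ 2 ≤ (L ^ d) ^ 2 * Z.card :=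
    hA.sq_sum_mul_pow_le_of_pow_apply_eq_zero hn hev hsort hpos hv hunit
      fun j hj => (Finset.mem_filter.mp hj).2
  have hcard : ({j : Fin n | (A ^ d) i j = 0}.ncard : ℝ) = Z.card := by
    simp [Z, Set.ncard_eq_toFinset_card']
  rw [hcard]
  calc (Z.card : ℝ) ≤ (L ^ d / μ₁ ^ d) ^ 2 / ((1 - ε₀) / Real.sqrt n) ^ 4 :=
        le_div_of_sq_mul_le (Nat.cast_nonneg _) hp hc (hvlow i) (pow_pos hpos d) hsq
    _ = _ := by
        have hsqrt : Real.sqrt n ^ 4 = n ^ 2 := by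
          rw [show 4 = 2 * 2 from rfl, pow_mul, Real.sq_sqrt (Nat.cast_nonneg _)]
        rw [← div_pow, ← pow_mul, mul_comm 2 d, div_pow (1 - ε₀), hsqrt]
        field_simp
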